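/- The power graph of an EPO-group G (a finite group all of whose nonidentity elements have prime order) is isomorphic to K₁ ∨ (⊕_{p ∈ π(G)} c_p · K_{p-1}), the join of a single vertex with the disjoint union, over primes p dividing |G|, of c_p copies of the complete graph K_{p-1}, where c_p is the number of cyclic subgroups of order p in G. -/

import Mathlib

open SimpleGraph

noncomputable def treeCount {V : Type*} (Γ : SimpleGraph V) : ℕ :=
  {H : Γ.Subgraph | H.IsSpanning ∧ H.coe.IsTree}.ncard

def powerGraph (G : Type*) [Group G] : SimpleGraph G where
  Adj x y := x ≠ y ∧ (x ∈ Subgroup.zpowers y ∨ y ∈ Subgroup.zpowers x)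
  symm := by constructor; rintro a b ⟨h, h'⟩; exact ⟨h.symm, h'.symm⟩
  loopless := by constructor; intro a h; exact h.1 rfl

def powerGraphOn (G : Type*) [Group G] (X : Set G) : SimpleGraph X where
  Adj x y := x ≠ y ∧ (Subgroup.zpowers (x : G) ≤ Subgroup.zpowers (y : G) ∨
      Subgroup.zpowers (y : G) ≤ Subgroup.zpowers (x : G))
  symm := by constructor; rintro a b ⟨h, h'⟩; exact ⟨h.symm, h'.symm⟩
  loopless := by constructor; intro a h; exact h.1 rfl

def joinGraph {α β : Type*} (G₁ : SimpleGraph α) (G₂ : SimpleGraph β) :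
    SimpleGraph (α ⊕ β) where
  Adj u v := match u, v with
    | .inl a, .inl b => G₁.Adj a b
    | .inr a, .inr b => G₂.Adj a b
    | _, _ => True
  symm := by constructor; rintro (a|a) (b|b) h <;> simp_all <;> exact h.symm
  loopless := by constructor; rintro (a|a) h <;> exact h.ne rfl

def disjUnionGraph {α β : Type*} (G₁ : SimpleGraph α) (G₂ : SimpleGraph β) :
    SimpleGraph (α ⊕ β) where
  Adj u v := match u, v with
    | .inl a, .inl b => G₁.Adj a b
    | .inr a, .inr b => G₂.Adj a b
    | _, _ => False
  symm := by constructor; rintro (a|a) (b|b) h <;> simp_all <;> exact h.symm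
  loopless := by constructor; rintro (a|a) h <;> exact h.ne rfl

def copiesK (c k : ℕ) : SimpleGraph (Fin c × Fin k) where
  Adj u v := u.1 = v.1 ∧ u ≠ v
  symm := by constructor; rintro a b ⟨h, h'⟩; exact ⟨h.symm, h'.symm⟩
  loopless := by constructor; intro a h; exact h.2 rfl

/-- The disjoint union, over the cyclic subgroups `C` of prime order of `G`, of
the cliques on the nonidentity elements of `C` (i.e. ⊕_{p ∈ π(G)} c_p·K_{p-1}). -/
def cliquesOfPrimeOrderSubgroups (G : Type*) [Group G] :
    SimpleGraph (Σ C : {C : Subgroup G // ∃ p : ℕ, p.Prime ∧ Nat.card C = p},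
      {x : G // x ∈ C.1.1 ∧ x ≠ 1}) where
  Adj u v := u.1 = v.1 ∧ u ≠ v
  symm := by constructor; rintro a b ⟨h, h'⟩; exact ⟨h.symm, h'.symm⟩
  loopless := by constructor; intro a h; exact h.2 rfl

/-! The identity is adjacent to every other element of the power graph. Two elements of prime
order are adjacent exactly when they generate the same subgroup, since a nontrivial element of a
group of prime order generates it. So in an EPO-group the nonidentity elements fall apart into
cliques, one on the nonidentity elements of each subgroup of prime order. -/

namespace SimpleGraph

variable {α₁ α₂ β₁ β₂ : Type*} {Γ₁ : SimpleGraph α₁} {Γ₂ : SimpleGraph α₂}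
  {Δ₁ : SimpleGraph β₁} {Δ₂ : SimpleGraph β₂}

def Iso.joinGraphCongr (e : Γ₁ ≃g Γ₂) (f : Δ₁ ≃g Δ₂) :
    joinGraph Γ₁ Δ₁ ≃g joinGraph Γ₂ Δ₂ where
  toEquiv := Equiv.sumCongr e.toEquiv f.toEquiv
  map_rel_iff' := by
    rintro (a | a) (b | b) <;> simp [joinGraph, e.map_adj_iff, f.map_adj_iff]

noncomputable def isoJoinOfUniversalVertex {V : Type*} (Γ : SimpleGraph V) (v : V)
    (hv : ∀ w, w ≠ v → Γ.Adj v w) :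
    joinGraph (completeGraph PUnit) (Γ.induce {v}ᶜ) ≃g Γ := by
  classical
  exact
  { toEquiv := (Equiv.sumCongr (Equiv.ofUnique PUnit ({v} : Set V)) (Equiv.refl _)).trans
      (Equiv.Set.sumCompl {v})
    map_rel_iff' := by
      rintro (a | a) (b | b)
      · simp [joinGraph]
      · simpa [joinGraph] using hv b b.2
      · simpa [joinGraph] using (hv a a.2).symm
      · simp [joinGraph] }

end SimpleGraph

theorem Subgroup.zpowers_eq_of_mem_of_prime_card {G : Type*} [Group G] {C : Subgroup G}
    (hC : (Nat.card C).Prime) {x : G} (hx : x ∈ C) (hx1 : x ≠ 1) : zpowers x = C := by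
  have : Finite C := Nat.finite_of_card_ne_zero hC.ne_zero
  have hle : zpowers x ≤ C := zpowers_le.2 hx
  rcases (Nat.dvd_prime hC).1 (card_dvd_of_le hle) with h | h
  · exact absurd (zpowers_eq_bot.1 (card_eq_one.1 h)) hx1
  · exact eq_of_le_of_card_ge hle h.ge

section PowerGraph

open Subgroup

variable {G : Type*} [Group G]

theorem powerGraph_adj_one {g : G} (hg : g ≠ 1) : (powerGraph G).Adj 1 g :=
  ⟨hg.symm, .inl (one_mem _)⟩

theorem powerGraph_adj_iff_of_prime_orderOf {x y : G} (hx : (orderOf x).Prime)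
    (hy : (orderOf y).Prime) :
    (powerGraph G).Adj x y ↔ x ≠ y ∧ zpowers x = zpowers y := by
  have hx1 : x ≠ 1 := fun h => hx.ne_one (orderOf_eq_one_iff.2 h)
  have hy1 : y ≠ 1 := fun h => hy.ne_one (orderOf_eq_one_iff.2 h)
  refine and_congr_right fun _ => ⟨?_, fun h => .inl (h ▸ mem_zpowers x)⟩
  rintro (h | h)
  · exact zpowers_eq_of_mem_of_prime_card (by rwa [Nat.card_zpowers]) h hx1
  · exact (zpowers_eq_of_mem_of_prime_card (by rwa [Nat.card_zpowers]) h hy1).symm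

def powerGraphInduceComplOneIso (hEPO : ∀ g : G, g ≠ 1 → (orderOf g).Prime) :
    (powerGraph G).induce {1}ᶜ ≃g cliquesOfPrimeOrderSubgroups G where
  toFun g := ⟨⟨zpowers (g : G), orderOf (g : G), hEPO g g.2, Nat.card_zpowers (g : G)⟩,
    ⟨g, mem_zpowers (g : G), g.2⟩⟩
  invFun u := ⟨u.2, u.2.2.2⟩
  left_inv _ := rfl
  right_inv := by
    rintro ⟨⟨C, p, hp, hC⟩, x, hx, hx1⟩
    obtain rfl := zpowers_eq_of_mem_of_prime_card (hC ▸ hp) hx hx1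
    rfl
  map_rel_iff' {a b} := by
    change (_ ∧ _) ↔ (powerGraph G).Adj a b
    rw [powerGraph_adj_iff_of_prime_orderOf (hEPO a a.2) (hEPO b b.2), and_comm, Subtype.ext_iff]
    refine and_congr_left fun _ => not_congr ⟨fun h => congrArg (fun u => u.2.1) h, fun h => ?_⟩
    rw [Subtype.ext h]

end PowerGraph

theorem powerGraph_EPO_iso_general (G : Type*) [Group G]
    (hEPO : ∀ g : G, g ≠ 1 → (orderOf g).Prime) :
    Nonempty ((powerGraph G) ≃g
      joinGraph (completeGraph PUnit) (cliquesOfPrimeOrderSubgroups G)) :=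
  ⟨(isoJoinOfUniversalVertex _ 1 fun _ => powerGraph_adj_one).symm.trans
    (Iso.refl.joinGraphCongr (powerGraphInduceComplOneIso hEPO))⟩

/-- The power graph of an EPO-group is the join of a single vertex with a
disjoint union of cliques: K₁ ∨ (⊕_{p ∈ π(G)} c_p·K_{p-1}). -/
theorem powerGraph_EPO_iso (G : Type*) [Group G] [Finite G]
    (hEPO : ∀ g : G, g ≠ 1 → (orderOf g).Prime) :
    Nonempty ((powerGraph G) ≃g
      joinGraph (completeGraph PUnit) (cliquesOfPrimeOrderSubgroups G)) :=
  powerGraph_EPO_iso_general G hEPO
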